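/- arXiv:math/0304106 — 2 statements merged into one kernel-verified Lean document; each statement's English description precedes it below -/
import Mathlib

section
/- Let f : [0,1] → [0,1] be a regular homeomorphism that is strictly increasing (equivalently, f(0) = 0 and f(1) = 1). Then f is the identity map of [0,1]. -/
/-! The orbit of any `x` under the increasing map `f` is monotone, hence converges to a point `q`,
which is fixed by continuity. The iterates `f⁻ⁿ` fix `q` and send the points `fⁿ x`, which tend
to `q`, back to `x`; equicontinuity of these iterates at `q` forces `x = q`. -/

/-! The group of self-homeomorphisms of a topological space, with the uniform
metric `d(f,g) = max_{x} d (f x) (g x)` (induced from `C(X, X)`) when the space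
is compact metric. -/

instance Homeomorph.instGroup' {X : Type*} [TopologicalSpace X] : Group (X ≃ₜ X) where
  mul f g := g.trans f
  one := Homeomorph.refl X
  inv := Homeomorph.symm
  mul_assoc _ _ _ := rfl
  one_mul _ := rfl
  mul_one _ := rfl
  inv_mul_cancel f := Homeomorph.ext fun x => f.symm_apply_apply x

@[simp] theorem Homeomorph.mul_apply' {X : Type*} [TopologicalSpace X] (f g : X ≃ₜ X) (x : X) :
    (f * g) x = f (g x) := rfl

@[simp] theorem Homeomorph.one_apply' {X : Type*} [TopologicalSpace X] (x : X) :
    (1 : X ≃ₜ X) x = x := rfl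

noncomputable instance Homeomorph.instMetricSpace {Y : Type*} [MetricSpace Y] [CompactSpace Y] :
    MetricSpace (Y ≃ₜ Y) :=
  MetricSpace.induced (fun f => (f : C(Y, Y)))
    (fun _ _ h => Homeomorph.ext fun x => ContinuousMap.congr_fun h x)
    inferInstance

open Filter Topology Function

theorem Monotone.exists_tendsto_iterate {α : Type*} [CompleteLinearOrder α] [TopologicalSpace α]
    [OrderTopology α] {f : α → α} (hf : Monotone f) (x : α) :
    ∃ q, Tendsto (fun n => f^[n] x) atTop (𝓝 q) := by
  rcases le_total x (f x) with h | h
  · exact ⟨_, tendsto_atTop_iSup (hf.monotone_iterate_of_le_map h)⟩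
  · exact ⟨_, tendsto_atTop_iInf (hf.antitone_iterate_of_map_le h)⟩

namespace Homeomorph

variable {X : Type*}

theorem coe_pow [TopologicalSpace X] (f : X ≃ₜ X) (n : ℕ) : ⇑(f ^ n) = (⇑f)^[n] := by
  induction n with
  | zero => rfl
  | succ n ih => rw [pow_succ, iterate_succ, ← ih]; rfl

theorem isFixedPt_of_tendsto_iterate [UniformSpace X] [T2Space X] (f : X ≃ₜ X) {x q : X}
    (hx : Tendsto (fun n => f^[n] x) atTop (𝓝 q))
    (hequi : EquicontinuousAt (fun n : ℕ => (⇑f.symm)^[n]) q) : IsFixedPt f x := by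
  have hq : IsFixedPt f q := _root_.isFixedPt_of_tendsto_iterate hx f.continuous.continuousAt
  have hq_symm : ∀ n, (⇑f.symm)^[n] q = q := fun n =>
    (hq.equiv_symm (e := f.toEquiv)).iterate n
  suffices x = q by rwa [this]
  refine (eq_of_uniformity fun hV => ?_).symm
  obtain ⟨n, hn⟩ := (hx.eventually (hequi _ hV)).exists
  have hinv : LeftInverse f.symm f := f.symm_apply_apply
  simpa only [hq_symm, hinv.iterate n x] using hn n

end Homeomorph

/-- A regular homeomorphism of `[0,1]` (the family of all its iterates
`f^n`, `n ∈ ℤ`, is uniformly equicontinuous) which is strictly increasing is the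
identity map of `[0,1]`. -/
theorem regular_increasing_homeo_unitInterval_eq_id (f : unitInterval ≃ₜ unitInterval)
    (hreg : UniformEquicontinuous fun n : ℤ => ((f ^ n : unitInterval ≃ₜ unitInterval) :
      unitInterval → unitInterval))
    (hmono : StrictMono (f : unitInterval → unitInterval)) :
    f = Homeomorph.refl unitInterval := by
  have hinv_iterates : (fun n : ℕ => (⇑f.symm)^[n]) =
      (fun n : ℤ => ⇑(f ^ n)) ∘ fun n : ℕ => -(n : ℤ) := by
    funext n
    simp only [comp_apply, zpow_neg, zpow_natCast, ← inv_pow, Homeomorph.coe_pow]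
    rfl
  have hequi : Equicontinuous fun n : ℕ => (⇑f.symm)^[n] := by
    rw [hinv_iterates]
    exact (hreg.comp _).equicontinuous
  ext x
  obtain ⟨q, hq⟩ := hmono.monotone.exists_tendsto_iterate x
  exact congrArg Subtype.val (f.isFixedPt_of_tendsto_iterate hq (hequi q))
end

section
/- Let f be a regular, orientation-preserving homeomorphism of the circle S¹ = ℝ/ℤ which has at least one fixed point. Then f is the identity map of the circle. -/
open Filter Topology Set Function

theorem Homeomorph.coe_pow_s5 {X : Type*} [TopologicalSpace X] (f : X ≃ₜ X) (n : ℕ) :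
    ⇑(f ^ n) = f^[n] :=
  hom_coe_pow (⇑) rfl (fun _ _ => rfl) f n

theorem Homeomorph.zpow_neg_apply_iterate {X : Type*} [TopologicalSpace X] (f : X ≃ₜ X) (n : ℕ)
    (x : X) : (f ^ (-n : ℤ)) (f^[n] x) = x := by
  rw [← f.coe_pow_s5, ← zpow_natCast, ← Homeomorph.mul_apply', ← zpow_add, neg_add_cancel, zpow_zero,
    Homeomorph.one_apply']

theorem Homeomorph.eq_of_tendsto_iterate_of_isFixedPt {X : Type*} [MetricSpace X] (f : X ≃ₜ X)
    (hreg : UniformEquicontinuous fun n : ℤ => ⇑(f ^ n)) {x p : X} (hp : IsFixedPt f p)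
    (hx : Tendsto (fun n => f^[n] x) atTop (𝓝 p)) : x = p := by
  by_contra hne
  obtain ⟨δ, hδ, hequi⟩ := Metric.uniformEquicontinuous_iff.mp hreg _ (dist_pos.2 hne)
  obtain ⟨N, hN⟩ := Metric.tendsto_atTop.mp hx δ hδ
  have hpN := f.zpow_neg_apply_iterate N p
  rw [(hp.iterate N).eq] at hpN
  have h := hequi _ _ (hN N le_rfl) (-N)
  rw [f.zpow_neg_apply_iterate, hpN] at h
  exact lt_irrefl _ h

section ConditionallyCompleteLinearOrder

variable {α : Type*} [ConditionallyCompleteLinearOrder α] [TopologicalSpace α] [OrderTopology α]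
  {g : α → α} {x b : α}

theorem Monotone.exists_tendsto_iterate_of_le_map (hg : Monotone g) (hx : x ≤ g x)
    (hb : IsFixedPt g b) (hxb : x ≤ b) :
    ∃ p, g x ≤ p ∧ p ≤ b ∧ Tendsto (fun n => g^[n] x) atTop (𝓝 p) := by
  have hle : ∀ n, g^[n] x ≤ b := fun n => (hb.iterate n).eq ▸ hg.iterate n hxb
  have hbdd : BddAbove (range fun n => g^[n] x) := ⟨b, forall_mem_range.2 hle⟩
  exact ⟨⨆ n, g^[n] x, le_ciSup hbdd 1, ciSup_le hle,
    tendsto_atTop_ciSup (hg.monotone_iterate_of_le_map hx) hbdd⟩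

theorem Monotone.exists_tendsto_iterate_of_map_le (hg : Monotone g) (hx : g x ≤ x)
    (hb : IsFixedPt g b) (hbx : b ≤ x) :
    ∃ p, b ≤ p ∧ p ≤ g x ∧ Tendsto (fun n => g^[n] x) atTop (𝓝 p) := by
  obtain ⟨p, hxp, hpb, hlim⟩ :=
    hg.dual.exists_tendsto_iterate_of_le_map (x := OrderDual.toDual x) hx hb hbx
  exact ⟨p, hpb, hxp, hlim⟩

end ConditionallyCompleteLinearOrder

theorem AddCircle.coe_eq_coe_iff_of_abs_sub_lt {𝕜 : Type*} [AddCommGroup 𝕜] [LinearOrder 𝕜]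
    [IsOrderedAddMonoid 𝕜] [Archimedean 𝕜] {p : 𝕜} [Fact (0 < p)] {x y : 𝕜} (h : |x - y| < p) :
    (x : AddCircle p) = y ↔ x = y := by
  have hp : 0 < p := Fact.out
  obtain ⟨hxy, hyx⟩ := abs_sub_lt_iff.1 h
  refine coe_eq_coe_iff_of_mem_Ico (a := min x y) ⟨min_le_left _ _, ?_⟩ ⟨min_le_right _ _, ?_⟩
  · rw [← min_add_add_right]
    exact lt_min (lt_add_of_pos_right x hp) (sub_lt_iff_lt_add'.1 hxy)
  · rw [← min_add_add_right]
    exact lt_min (sub_lt_iff_lt_add'.1 hyx) (lt_add_of_pos_right y hp)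

namespace CircleDeg1Lift

theorem exists_tendsto_iterate_of_not_isFixedPt (G : CircleDeg1Lift) {x₀ y : ℝ}
    (h₀ : IsFixedPt G x₀) (hy : y ∈ Ioo x₀ (x₀ + 1)) (hGy : ¬IsFixedPt G y) :
    ∃ p, |p - y| < 1 ∧ p ≠ y ∧ Tendsto (fun n => G^[n] y) atTop (𝓝 p) := by
  rcases lt_or_gt_of_ne hGy with hlt | hgt
  · obtain ⟨p, hx₀p, hpG, hlim⟩ := G.monotone.exists_tendsto_iterate_of_map_le hlt.le h₀ hy.1.le
    exact ⟨p, abs_sub_lt_iff.2 ⟨by linarith, by linarith [hy.2]⟩, (hpG.trans_lt hlt).ne, hlim⟩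
  · have h₁ : IsFixedPt G (x₀ + 1) := by rw [IsFixedPt, G.map_add_one, h₀.eq]
    obtain ⟨p, hGp, hpx, hlim⟩ := G.monotone.exists_tendsto_iterate_of_le_map hgt.le h₁ hy.2.le
    exact ⟨p, abs_sub_lt_iff.2 ⟨by linarith [hy.1], by linarith⟩, (hgt.trans_le hGp).ne', hlim⟩

theorem isFixedPt_of_uniformEquicontinuous_zpow (G : CircleDeg1Lift)
    (f : UnitAddCircle ≃ₜ UnitAddCircle) (hreg : UniformEquicontinuous fun n : ℤ => ⇑(f ^ n))
    (hfG : ∀ x : ℝ, f x = G x) {x₀ y : ℝ} (h₀ : IsFixedPt G x₀) (hy : y ∈ Ioo x₀ (x₀ + 1)) :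
    IsFixedPt G y := by
  by_contra hGy
  obtain ⟨p, hpy, hpy_ne, hlim⟩ := G.exists_tendsto_iterate_of_not_isFixedPt h₀ hy hGy
  have hsemi : Semiconj ((↑) : ℝ → UnitAddCircle) G f := fun x => (hfG x).symm
  have hlim' : Tendsto (fun n => f^[n] (y : UnitAddCircle)) atTop (𝓝 (p : UnitAddCircle)) := by
    simp only [← hsemi.iterate_right _ y]
    exact ((AddCircle.continuous_mk' 1).tendsto p).comp hlim
  have hfp : IsFixedPt f p := isFixedPt_of_tendsto_iterate hlim' f.continuous.continuousAt
  exact hpy_ne ((AddCircle.coe_eq_coe_iff_of_abs_sub_lt hpy).1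
    (f.eq_of_tendsto_iterate_of_isFixedPt hreg hfp hlim').symm)

end CircleDeg1Lift

/-- A regular homeomorphism of the circle `ℝ/ℤ` (the family of all its
iterates `f^n`, `n ∈ ℤ`, is uniformly equicontinuous) which is orientation-preserving
(it admits a strictly increasing degree-one lift to `ℝ`) and has a fixed point is the
identity map of the circle. -/
theorem regular_orientation_preserving_circle_homeo_with_fixed_point_eq_id
    (f : UnitAddCircle ≃ₜ UnitAddCircle)
    (hreg : UniformEquicontinuous fun n : ℤ => ((f ^ n : UnitAddCircle ≃ₜ UnitAddCircle) :
      UnitAddCircle → UnitAddCircle))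
    (horient : ∃ F : ℝ → ℝ, StrictMono F ∧ (∀ x : ℝ, F (x + 1) = F x + 1) ∧
      ∀ x : ℝ, f (x : UnitAddCircle) = ((F x : ℝ) : UnitAddCircle))
    (hfix : ∃ x : UnitAddCircle, f x = x) :
    f = Homeomorph.refl UnitAddCircle := by
  obtain ⟨F, hF_mono, hF_add_one, hfF⟩ := horient
  obtain ⟨x, hx⟩ := hfix
  obtain ⟨x₀, rfl⟩ := QuotientAddGroup.mk_surjective x
  obtain ⟨k, hk⟩ : ∃ k : ℤ, (k : ℝ) = F x₀ - x₀ := by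
    simpa using (AddCircle.coe_eq_zero_iff (1 : ℝ) (x := F x₀ - x₀)).1
      (by rw [AddCircle.coe_sub, ← hfF, hx, sub_self])
  let G : CircleDeg1Lift :=
    ⟨⟨fun x => F x - k, fun a b hab => sub_le_sub_right (hF_mono.monotone hab) _⟩,
      fun x => by simp only [hF_add_one]; ring⟩
  have hG : ∀ x, G x = F x - k := fun _ => rfl
  have hk_zero : ((k : ℝ) : UnitAddCircle) = 0 := (AddCircle.coe_eq_zero_iff 1).2 ⟨k, zsmul_one k⟩
  have hfG : ∀ x : ℝ, f x = G x := fun x => by rw [hfF, hG, AddCircle.coe_sub, hk_zero, sub_zero]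
  have hG₀ : IsFixedPt G x₀ := by rw [IsFixedPt, hG, hk, sub_sub_cancel]
  ext z
  obtain ⟨y, hy, rfl⟩ : ∃ y ∈ Ico x₀ (x₀ + 1), (y : UnitAddCircle) = z :=
    ⟨_, (AddCircle.equivIco 1 x₀ z).2, AddCircle.coe_equivIco⟩
  have hGy : IsFixedPt G y := by
    rcases hy.1.eq_or_lt with rfl | hxy
    · exact hG₀
    · exact G.isFixedPt_of_uniformEquicontinuous_zpow f hreg hfG hG₀ ⟨hxy, hy.2⟩
  rw [hfG, hGy.eq]
  rfl
end
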